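/- Let Γ be a graph, μ a degree-d polarization on Γ, and (𝓔, D) a μ-semistable pseudo-divisor on Γ. Then there exists a unique minimal μ-polystable pseudo-divisor (𝓔', D') on Γ with (𝓔', D') ≥ (𝓔, D): i.e., (𝓔',D') is μ-polystable, specializes to (𝓔,D), and every μ-polystable pseudo-divisor specializing to (𝓔,D) also specializes to (𝓔',D'). -/
import Mathlib


open scoped Classical

/-- A finite multigraph: finite vertex and edge types, with source and target maps
(an orientation is fixed on each edge). -/
structure Multigraph where
  V : Type
  E : Type
  [fintypeV : Fintype V]
  [fintypeE : Fintype E]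
  [decEqV : DecidableEq V]
  [decEqE : DecidableEq E]
  s : E → V
  t : E → V

attribute [instance] Multigraph.fintypeV Multigraph.fintypeE
attribute [instance] Multigraph.decEqV Multigraph.decEqE

namespace Multigraph

variable (G : Multigraph)

/-- Adjacency using only edges in `F`. -/
def adjOn (F : Finset G.E) (u v : G.V) : Prop :=
  ∃ e ∈ F, (G.s e = u ∧ G.t e = v) ∨ (G.s e = v ∧ G.t e = u)

/-- Adjacency in `G`. -/
def adj : G.V → G.V → Prop := G.adjOn Finset.univ

/-- `G` is connected. -/
def Connected : Prop := ∀ u v : G.V, Relation.EqvGen G.adj u v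

/-- Number of connected components of the spanning subgraph with edge set `F`. -/
noncomputable def b0 (F : Finset G.E) : ℕ :=
  Nat.card (Quotient (Relation.EqvGen.setoid (G.adjOn F)))

/-- `E(A∖B, B∖A)`: the set of edges connecting `A∖B` to `B∖A`. -/
def crossEdges (A B : Finset G.V) : Finset G.E :=
  Finset.univ.filter fun e =>
    (G.s e ∈ A \ B ∧ G.t e ∈ B \ A) ∨ (G.s e ∈ B \ A ∧ G.t e ∈ A \ B)

/-- The valence of `v` in the edge set `F` (loops count twice). -/
def valE (F : Finset G.E) (v : G.V) : ℕ :=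
  (F.filter fun e => G.s e = v).card + (F.filter fun e => G.t e = v).card

/-- `β_D(S) = deg(D|_S) − μ(S) + δ_{Γ,S}/2`. -/
noncomputable def beta (μ : G.V → ℝ) (D : G.V → ℤ) (S : Finset G.V) : ℝ :=
  (∑ v ∈ S, (D v : ℝ)) - (∑ v ∈ S, μ v) + (G.crossEdges S Sᶜ).card / 2

end Multigraph

/-- A pseudo-divisor `(𝓔, D)` on `G`: a subset `𝓔` of edges and the divisor on the
subdivision `Γ^𝓔` which takes the value `−1` at each exceptional vertex; it is recorded
by its values `D` on the original vertices. -/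
structure PseudoDiv (G : Multigraph) where
  E : Finset G.E
  D : G.V → ℤ

namespace Multigraph

variable (G : Multigraph)

/-- The degree of a pseudo-divisor: `∑ D(v) − |𝓔|` (the exceptional vertices contribute `−1`). -/
def degP (P : PseudoDiv G) : ℤ := (∑ v, P.D v) - P.E.card

/-- `β_{𝓔,D}(S) = deg(D|_S) − μ_𝓔(S) + δ_{Γ_𝓔,S}/2`, where `μ_𝓔(v) = μ(v) + val_𝓔(v)/2`. -/
noncomputable def betaP (μ : G.V → ℝ) (P : PseudoDiv G) (S : Finset G.V) : ℝ :=
  (∑ v ∈ S, (P.D v : ℝ)) - (∑ v ∈ S, (μ v + (G.valE P.E v : ℝ) / 2))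
    + ((G.crossEdges S Sᶜ).filter fun e => e ∉ P.E).card / 2

/-- `(𝓔,D)` is `μ`-semistable. -/
def Semistable (μ : G.V → ℝ) (P : PseudoDiv G) : Prop :=
  ∀ S : Finset G.V, 0 ≤ G.betaP μ P S

/-- `(𝓔,D)` is `μ`-polystable: `β ≥ 0` always, with strict inequality whenever
`E(S,Sᶜ) ⊄ 𝓔`. -/
def Polystable (μ : G.V → ℝ) (P : PseudoDiv G) : Prop :=
  ∀ S : Finset G.V, 0 ≤ G.betaP μ P S ∧
    (¬ G.crossEdges S Sᶜ ⊆ P.E → 0 < G.betaP μ P S)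

/-- `(v₀,μ)`-quasistability for a pseudo-divisor. -/
def Quasistable (v₀ : G.V) (μ : G.V → ℝ) (P : PseudoDiv G) : Prop :=
  ∀ S : Finset G.V, S ≠ Finset.univ →
    (0 ≤ G.betaP μ P S ∧ (v₀ ∈ S → 0 < G.betaP μ P S))

/-- A specialization `P ≥ Q` witnessed by the choice `a`, which assigns to each edge
`e ∈ P.E ∖ Q.E` the endpoint onto which the exceptional vertex of `e` is contracted. -/
def SpecChoice (P Q : PseudoDiv G) (a : G.E → G.V) : Prop :=
  Q.E ⊆ P.E ∧ (∀ e, a e = G.s e ∨ a e = G.t e) ∧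
    ∀ v, Q.D v = P.D v - ((P.E \ Q.E).filter fun e => a e = v).card

/-- The specialization relation on pseudo-divisors: `Spec P Q` means `P ≥ Q`. -/
def Spec (P Q : PseudoDiv G) : Prop := ∃ a, G.SpecChoice P Q a

/-- The rank `rk(𝓔,D) = |𝓔| − b₀(Γ_𝓔) + b₀(Γ)`. -/
noncomputable def rk (P : PseudoDiv G) : ℤ :=
  (P.E.card : ℤ) - G.b0 P.Eᶜ + G.b0 Finset.univ

end Multigraph


namespace Multigraph

variable {G : Multigraph}

/-- Real-valued indicator of a proposition. -/
noncomputable def ind (p : Prop) : ℝ := if p then 1 else 0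

lemma ind_nonneg (p : Prop) : 0 ≤ ind p := by
  unfold ind; split <;> norm_num

/-- `e` crosses the cut `T`. -/
def crossP (G : Multigraph) (T : Finset G.V) (e : G.E) : Prop :=
  (G.s e ∈ T ∧ G.t e ∉ T) ∨ (G.s e ∉ T ∧ G.t e ∈ T)

lemma mem_crossEdges_compl {T : Finset G.V} {e : G.E} :
    e ∈ G.crossEdges T Tᶜ ↔ G.crossP T e := by
  simp only [crossEdges, crossP, Finset.mem_filter, Finset.mem_univ, true_and,
    Finset.mem_sdiff, Finset.mem_compl, not_not]
  tauto

lemma mem_crossEdges {S T : Finset G.V} {e : G.E} :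
    e ∈ G.crossEdges S T ↔
      ((G.s e ∈ S ∧ G.s e ∉ T ∧ G.t e ∈ T ∧ G.t e ∉ S) ∨
       (G.s e ∈ T ∧ G.s e ∉ S ∧ G.t e ∈ S ∧ G.t e ∉ T)) := by
  simp only [crossEdges, Finset.mem_filter, Finset.mem_univ, true_and, Finset.mem_sdiff]
  tauto

lemma card_filter_real (s : Finset G.E) (p : G.E → Prop) [DecidablePred p] :
    (((s.filter p).card : ℝ)) = ∑ e ∈ s, ind (p e) := by
  rw [Finset.card_filter]
  push_cast
  refine Finset.sum_congr rfl fun e _ => ?_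
  by_cases h : p e <;> simp [h, ind]

lemma sum_ind_eq_mem (T : Finset G.V) (x : G.V) :
    ∑ v ∈ T, ind (x = v) = ind (x ∈ T) := by
  unfold ind
  by_cases h : x ∈ T
  · rw [if_pos h, Finset.sum_eq_single_of_mem x h]
    · exact if_pos rfl
    · exact fun v hv hne => if_neg (fun he => hne he.symm)
  · rw [if_neg h, Finset.sum_eq_zero]
    exact fun v hv => if_neg (fun he => h (by rw [he]; exact hv))

/-- Master formula for `betaP` as a sum over all edges. -/
lemma betaP_formula (μ : G.V → ℝ) (P : PseudoDiv G) (T : Finset G.V) :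
    G.betaP μ P T = (∑ v ∈ T, ((P.D v : ℝ) - μ v))
      - (1/2) * ∑ e, (if e ∈ P.E then ind (G.s e ∈ T) + ind (G.t e ∈ T)
          else - ind (G.crossP T e)) := by
  have hval : ∑ v ∈ T, ((G.valE P.E v : ℝ)) = ∑ e ∈ P.E, (ind (G.s e ∈ T) + ind (G.t e ∈ T)) := by
    unfold valE
    push_cast
    rw [Finset.sum_add_distrib, Finset.sum_add_distrib]
    congr 1
    · calc ∑ v ∈ T, ((P.E.filter fun e => G.s e = v).card : ℝ)
          = ∑ v ∈ T, ∑ e ∈ P.E, ind (G.s e = v) :=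
            Finset.sum_congr rfl fun v _ => card_filter_real _ _
        _ = ∑ e ∈ P.E, ∑ v ∈ T, ind (G.s e = v) := Finset.sum_comm
        _ = _ := Finset.sum_congr rfl fun e _ => sum_ind_eq_mem T (G.s e)
    · calc ∑ v ∈ T, ((P.E.filter fun e => G.t e = v).card : ℝ)
          = ∑ v ∈ T, ∑ e ∈ P.E, ind (G.t e = v) :=
            Finset.sum_congr rfl fun v _ => card_filter_real _ _
        _ = ∑ e ∈ P.E, ∑ v ∈ T, ind (G.t e = v) := Finset.sum_comm
        _ = _ := Finset.sum_congr rfl fun e _ => sum_ind_eq_mem T (G.t e)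
  have hδ : (((G.crossEdges T Tᶜ).filter fun e => e ∉ P.E).card : ℝ)
      = ∑ e ∈ Finset.univ.filter (fun e => e ∉ P.E), ind (G.crossP T e) := by
    have hset : (G.crossEdges T Tᶜ).filter (fun e => e ∉ P.E)
        = (Finset.univ.filter (fun e => e ∉ P.E)).filter (fun e => G.crossP T e) := by
      ext e
      simp only [Finset.mem_filter, Finset.mem_univ, true_and]
      rw [mem_crossEdges_compl]
      tauto
    rw [hset, card_filter_real]
  have hsplit : (∑ e, (if e ∈ P.E then ind (G.s e ∈ T) + ind (G.t e ∈ T)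
          else - ind (G.crossP T e)))
      = ∑ e ∈ P.E, (ind (G.s e ∈ T) + ind (G.t e ∈ T))
        - ∑ e ∈ Finset.univ.filter (fun e => e ∉ P.E), ind (G.crossP T e) := by
    rw [← Finset.sum_filter_add_sum_filter_not Finset.univ (· ∈ P.E)]
    have h1 : Finset.univ.filter (· ∈ P.E) = P.E := Finset.filter_univ_mem P.E
    have h2 : ∀ e ∈ P.E, (if e ∈ P.E then ind (G.s e ∈ T) + ind (G.t e ∈ T)
        else - ind (G.crossP T e)) = ind (G.s e ∈ T) + ind (G.t e ∈ T) :=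
      fun e he => if_pos he
    have h3 : ∀ e ∈ Finset.univ.filter (fun e => ¬ e ∈ P.E),
        (if e ∈ P.E then ind (G.s e ∈ T) + ind (G.t e ∈ T)
        else - ind (G.crossP T e)) = - ind (G.crossP T e) := by
      intro e he
      rw [Finset.mem_filter] at he
      exact if_neg he.2
    rw [Finset.sum_congr h1 h2, Finset.sum_congr rfl h3, Finset.sum_neg_distrib]
    ring
  unfold betaP
  rw [Finset.sum_add_distrib, hsplit]
  have : ∑ v ∈ T, (G.valE P.E v : ℝ) / 2 = (∑ v ∈ T, ((G.valE P.E v : ℝ))) / 2 :=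
    (Finset.sum_div _ _ _).symm
  rw [this, hval, hδ, Finset.sum_sub_distrib]
  ring


lemma ind_congr {p q : Prop} (h : p ↔ q) : ind p = ind q := by
  unfold ind
  by_cases hp : p
  · rw [if_pos hp, if_pos (h.mp hp)]
  · rw [if_neg hp, if_neg (fun hq => hp (h.mpr hq))]

/-- Key lemma: how `betaP` changes along a specialization. -/
lemma betaP_spec (μ : G.V → ℝ) {P Q : PseudoDiv G} {b : G.E → G.V}
    (h : G.SpecChoice Q P b) (T : Finset G.V) :
    G.betaP μ Q T = G.betaP μ P T
      - (((Q.E \ P.E).filter fun e => e ∈ G.crossEdges T Tᶜ ∧ b e ∉ T).card : ℝ) := by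
  obtain ⟨hsub, hb, hD⟩ := h
  rw [betaP_formula, betaP_formula, card_filter_real]
  have h1 : ∑ v ∈ T, ((Q.D v : ℝ) - μ v)
      = ∑ v ∈ T, ((P.D v : ℝ) - μ v) + ∑ e ∈ Q.E \ P.E, ind (b e ∈ T) := by
    have hp : ∀ v ∈ T, ((Q.D v : ℝ) - μ v)
        = (((P.D v : ℝ) - μ v) + ∑ e ∈ Q.E \ P.E, ind (b e = v)) := by
      intro v _
      have hq : (Q.D v : ℝ) = (P.D v : ℝ)
          + (((Q.E \ P.E).filter fun e => b e = v).card : ℝ) := by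
        rw [hD v]; push_cast; ring
      rw [hq, card_filter_real]; ring
    rw [Finset.sum_congr rfl hp, Finset.sum_add_distrib]
    congr 1
    rw [Finset.sum_comm]
    exact Finset.sum_congr rfl fun e _ => sum_ind_eq_mem T (b e)
  have h2 : (∑ e, (if e ∈ Q.E then ind (G.s e ∈ T) + ind (G.t e ∈ T)
          else - ind (G.crossP T e)))
      = (∑ e, (if e ∈ P.E then ind (G.s e ∈ T) + ind (G.t e ∈ T)
          else - ind (G.crossP T e)))
        + ∑ e ∈ Q.E \ P.E, (ind (G.s e ∈ T) + ind (G.t e ∈ T) + ind (G.crossP T e)) := by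
    have : ∑ e ∈ Q.E \ P.E, (ind (G.s e ∈ T) + ind (G.t e ∈ T) + ind (G.crossP T e))
        = ∑ e, (if e ∈ Q.E \ P.E then
            (ind (G.s e ∈ T) + ind (G.t e ∈ T) + ind (G.crossP T e)) else 0) := by
      rw [Finset.sum_ite_mem, Finset.univ_inter]
    rw [this, ← Finset.sum_add_distrib]
    refine Finset.sum_congr rfl fun e _ => ?_
    by_cases hP : e ∈ P.E
    · have hQ : e ∈ Q.E := hsub hP
      simp [hP, hQ, Finset.mem_sdiff]
    · by_cases hQ : e ∈ Q.E
      · simp only [if_pos hQ, if_neg hP, if_pos (Finset.mem_sdiff.mpr ⟨hQ, hP⟩)]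
        ring
      · simp only [if_neg hQ, if_neg hP,
          if_neg (fun hm => hQ (Finset.mem_sdiff.mp hm).1)]
        ring
  have h5 : ∑ e ∈ Q.E \ P.E, ind (e ∈ G.crossEdges T Tᶜ ∧ b e ∉ T)
      = ∑ e ∈ Q.E \ P.E, ind (G.crossP T e ∧ b e ∉ T) :=
    Finset.sum_congr rfl fun e _ =>
      ind_congr (and_congr_left fun _ => mem_crossEdges_compl)
  have h4 : ∑ e ∈ Q.E \ P.E, ind (b e ∈ T)
      = (1/2) * ∑ e ∈ Q.E \ P.E, (ind (G.s e ∈ T) + ind (G.t e ∈ T) + ind (G.crossP T e))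
        - ∑ e ∈ Q.E \ P.E, ind (G.crossP T e ∧ b e ∉ T) := by
    rw [Finset.mul_sum, ← Finset.sum_sub_distrib]
    refine Finset.sum_congr rfl fun e _ => ?_
    rcases hb e with hbe | hbe <;>
      by_cases hs : G.s e ∈ T <;> by_cases ht : G.t e ∈ T <;>
        simp [ind, crossP, hbe, hs, ht] <;> norm_num
  rw [h1, h2, h5, h4]
  ring

/-- Submodularity identity for `betaP`. -/
lemma betaP_submod (μ : G.V → ℝ) (P : PseudoDiv G) (S T : Finset G.V) :
    G.betaP μ P S + G.betaP μ P T
      = G.betaP μ P (S ∪ T) + G.betaP μ P (S ∩ T)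
        + (((G.crossEdges S T).filter fun e => e ∉ P.E).card : ℝ) := by
  rw [betaP_formula, betaP_formula, betaP_formula, betaP_formula, card_filter_real]
  have hlin : ∑ v ∈ S ∪ T, ((P.D v : ℝ) - μ v) + ∑ v ∈ S ∩ T, ((P.D v : ℝ) - μ v)
      = ∑ v ∈ S, ((P.D v : ℝ) - μ v) + ∑ v ∈ T, ((P.D v : ℝ) - μ v) :=
    Finset.sum_union_inter
  have hM : ∑ e ∈ G.crossEdges S T, ind (e ∉ P.E)
      = ∑ e, ind (e ∈ G.crossEdges S T ∧ e ∉ P.E) := by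
    calc ∑ e ∈ G.crossEdges S T, ind (e ∉ P.E)
        = ∑ e ∈ G.crossEdges S T, ind (e ∈ G.crossEdges S T ∧ e ∉ P.E) :=
          Finset.sum_congr rfl fun e he => ind_congr ⟨fun h2 => ⟨he, h2⟩, And.right⟩
      _ = ∑ e, ind (e ∈ G.crossEdges S T ∧ e ∉ P.E) := by
          refine Finset.sum_subset (Finset.subset_univ _) fun e _ hx => ?_
          have hne : ¬ (e ∈ G.crossEdges S T ∧ e ∉ P.E) := fun hc => hx hc.1
          simp [ind, hne]
  have hedge : ∑ e, (if e ∈ P.E then ind (G.s e ∈ S ∪ T) + ind (G.t e ∈ S ∪ T)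
          else - ind (G.crossP (S ∪ T) e))
      + ∑ e, (if e ∈ P.E then ind (G.s e ∈ S ∩ T) + ind (G.t e ∈ S ∩ T)
          else - ind (G.crossP (S ∩ T) e))
      = ∑ e, (if e ∈ P.E then ind (G.s e ∈ S) + ind (G.t e ∈ S)
          else - ind (G.crossP S e))
      + ∑ e, (if e ∈ P.E then ind (G.s e ∈ T) + ind (G.t e ∈ T)
          else - ind (G.crossP T e))
      + 2 * ∑ e, ind (e ∈ G.crossEdges S T ∧ e ∉ P.E) := by
    rw [Finset.mul_sum, ← Finset.sum_add_distrib, ← Finset.sum_add_distrib,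
      ← Finset.sum_add_distrib]
    refine Finset.sum_congr rfl fun e _ => ?_
    by_cases hP : e ∈ P.E <;>
      by_cases h1 : G.s e ∈ S <;> by_cases h2 : G.s e ∈ T <;>
      by_cases h3 : G.t e ∈ S <;> by_cases h4 : G.t e ∈ T <;>
      simp [ind, crossP, mem_crossEdges, Finset.mem_union, Finset.mem_inter,
        hP, h1, h2, h3, h4] <;> norm_num
  linarith [hlin, hedge, hM]

lemma spec_refl (P : PseudoDiv G) : G.Spec P P := by
  refine ⟨G.s, Finset.Subset.refl _, fun e => Or.inl rfl, fun v => ?_⟩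
  simp

lemma spec_trans {P Q R : PseudoDiv G} (h1 : G.Spec P Q) (h2 : G.Spec Q R) :
    G.Spec P R := by
  obtain ⟨a, haQP, ha, haD⟩ := h1
  obtain ⟨b, hbRQ, hb, hbD⟩ := h2
  refine ⟨fun e => if e ∈ Q.E then b e else a e, hbRQ.trans haQP, fun e => ?_, fun v => ?_⟩
  · by_cases hq : e ∈ Q.E
    · simpa [hq] using hb e
    · simpa [hq] using ha e
  · have hsplit : P.E \ R.E = (P.E \ Q.E) ∪ (Q.E \ R.E) := by
      ext e
      simp only [Finset.mem_sdiff, Finset.mem_union]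
      constructor
      · intro ⟨h1, h2⟩
        by_cases hq : e ∈ Q.E
        · exact Or.inr ⟨hq, h2⟩
        · exact Or.inl ⟨h1, hq⟩
      · rintro (⟨h1, h2⟩ | ⟨h1, h2⟩)
        · exact ⟨h1, fun hr => h2 (hbRQ hr)⟩
        · exact ⟨haQP h1, h2⟩
    have hdisj : Disjoint (P.E \ Q.E) (Q.E \ R.E) := by
      rw [Finset.disjoint_left]
      intro e he1 he2
      exact (Finset.mem_sdiff.mp he1).2 (Finset.mem_sdiff.mp he2).1
    have hcard : ((P.E \ R.E).filter fun e => (if e ∈ Q.E then b e else a e) = v).card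
        = ((P.E \ Q.E).filter fun e => a e = v).card
          + ((Q.E \ R.E).filter fun e => b e = v).card := by
      rw [hsplit, Finset.filter_union,
        Finset.card_union_of_disjoint (Finset.disjoint_filter_filter hdisj)]
      congr 1
      · refine congrArg Finset.card (Finset.filter_congr fun e he => ?_)
        rw [if_neg (Finset.mem_sdiff.mp he).2]
      · refine congrArg Finset.card (Finset.filter_congr fun e he => ?_)
        rw [if_pos (Finset.mem_sdiff.mp he).1]
    rw [hbD v, haD v, hcard]
    push_cast
    ring

lemma spec_antisymm {P Q : PseudoDiv G} (h1 : G.Spec P Q) (h2 : G.Spec Q P) :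
    P = Q := by
  obtain ⟨a, haQP, ha, haD⟩ := h1
  obtain ⟨b, hbPQ, hb, hbD⟩ := h2
  have hE : P.E = Q.E := Finset.Subset.antisymm hbPQ haQP
  have hD : P.D = Q.D := by
    funext v
    rw [haD v, hE]
    simp
  cases P; cases Q
  simp only at hE hD
  rw [hE, hD]

/-- One step of the construction: if `P` is semistable but not polystable, we can add
the uncrossed edges of a degenerate cut, staying semistable, decreasing the measure,
and staying below every polystable specialization. -/
lemma polystable_step (μ : G.V → ℝ) {P : PseudoDiv G} (hss : G.Semistable μ P)
    (hnot : ¬ G.Polystable μ P) :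
    ∃ P₁ : PseudoDiv G, G.Semistable μ P₁ ∧ G.Spec P₁ P ∧
      (Finset.univ \ P₁.E).card < (Finset.univ \ P.E).card ∧
      ∀ R, G.Polystable μ R → G.Spec R P → G.Spec R P₁ := by
  -- extract a degenerate cut
  rw [Polystable] at hnot
  push_neg at hnot
  obtain ⟨S, hS⟩ := hnot
  have hnsub : ¬ G.crossEdges S Sᶜ ⊆ P.E := (hS (hss S)).1
  have hzero : G.betaP μ P S = 0 := le_antisymm (hS (hss S)).2 (hss S)
  set a : G.E → G.V := fun e => if G.s e ∈ S then G.s e else G.t e with ha_def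
  set C : Finset G.E := (G.crossEdges S Sᶜ).filter (· ∉ P.E) with hC_def
  have hCcross : ∀ e ∈ C, G.crossP S e := fun e he =>
    mem_crossEdges_compl.mp (Finset.mem_filter.mp he).1
  have hCnp : ∀ e ∈ C, e ∉ P.E := fun e he => (Finset.mem_filter.mp he).2
  have haS : ∀ e ∈ C, a e ∈ S := by
    intro e he
    rcases hCcross e he with ⟨h1, h2⟩ | ⟨h1, h2⟩
    · rw [ha_def]; simpa [h1] using h1
    · rw [ha_def]; simpa [h1] using h2
  have hav : ∀ e, a e = G.s e ∨ a e = G.t e := by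
    intro e
    rw [ha_def]
    by_cases h : G.s e ∈ S
    · exact Or.inl (by simp [h])
    · exact Or.inr (by simp [h])
  set P₁ : PseudoDiv G :=
    ⟨P.E ∪ C, fun v => P.D v + ((C.filter fun e => a e = v).card : ℤ)⟩ with hP₁_def
  have hE : P₁.E \ P.E = C := by
    ext e
    simp only [hP₁_def, Finset.mem_sdiff, Finset.mem_union]
    exact ⟨fun h => h.1.resolve_left h.2, fun h => ⟨Or.inr h, hCnp e h⟩⟩
  have hspec : G.SpecChoice P₁ P a := by
    refine ⟨Finset.subset_union_left, hav, fun v => ?_⟩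
    show P.D v = P.D v + ((C.filter fun e => a e = v).card : ℤ)
      - ((P₁.E \ P.E).filter fun e => a e = v).card
    rw [hE]; ring
  have hCsub : ∀ T : Finset G.V,
      C.filter (fun e => e ∈ G.crossEdges T Tᶜ ∧ a e ∉ T)
        ⊆ (G.crossEdges S T).filter (· ∉ P.E) := by
    intro T e he
    rw [Finset.mem_filter] at he ⊢
    obtain ⟨heC, heT, haT⟩ := he
    have hTcr := mem_crossEdges_compl.mp heT
    have hScr := hCcross e heC
    refine ⟨mem_crossEdges.mpr ?_, hCnp e heC⟩
    by_cases hs : G.s e ∈ S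
    · have ha' : a e = G.s e := by rw [ha_def]; simp [hs]
      have hsT : G.s e ∉ T := ha' ▸ haT
      have htS : G.t e ∉ S := by
        rcases hScr with ⟨_, h⟩ | ⟨h, _⟩
        · exact h
        · exact absurd hs h
      have htT : G.t e ∈ T := by
        rcases hTcr with ⟨h1, _⟩ | ⟨_, h2⟩
        · exact absurd h1 hsT
        · exact h2
      exact Or.inl ⟨hs, hsT, htT, htS⟩
    · have htS : G.t e ∈ S := by
        rcases hScr with ⟨h, _⟩ | ⟨_, h⟩
        · exact absurd h hs
        · exact h
      have ha' : a e = G.t e := by rw [ha_def]; simp [hs]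
      have htT : G.t e ∉ T := ha' ▸ haT
      have hsT : G.s e ∈ T := by
        rcases hTcr with ⟨h1, _⟩ | ⟨_, h2⟩
        · exact h1
        · exact absurd h2 htT
      exact Or.inr ⟨hsT, hs, htS, htT⟩
  refine ⟨P₁, ?_, ⟨a, hspec⟩, ?_, ?_⟩
  · -- semistable
    intro T
    have hβ := betaP_spec μ hspec T
    rw [hE] at hβ
    have hsubm := betaP_submod μ P S T
    have hcard : ((C.filter (fun e => e ∈ G.crossEdges T Tᶜ ∧ a e ∉ T)).card : ℝ)
        ≤ (((G.crossEdges S T).filter (· ∉ P.E)).card : ℝ) :=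
      Nat.cast_le.mpr (Finset.card_le_card (hCsub T))
    have h1 := hss (S ∪ T)
    have h2 := hss (S ∩ T)
    rw [hβ]
    linarith
  · -- measure decreases
    obtain ⟨e₀, he₀X, he₀P⟩ := Finset.not_subset.mp hnsub
    have he₀C : e₀ ∈ C := Finset.mem_filter.mpr ⟨he₀X, he₀P⟩
    apply Finset.card_lt_card
    rw [Finset.ssubset_def]
    constructor
    · exact Finset.sdiff_subset_sdiff (Finset.Subset.refl _) Finset.subset_union_left
    · intro h
      have h1 : e₀ ∈ Finset.univ \ P.E := Finset.mem_sdiff.mpr ⟨Finset.mem_univ _, he₀P⟩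
      have h2 := h h1
      rw [Finset.mem_sdiff] at h2
      exact h2.2 (by simp only [hP₁_def, Finset.mem_union]; exact Or.inr he₀C)
  · -- minimality
    intro R hRpol hRP
    obtain ⟨b, hbspec⟩ := hRP
    have hβR := betaP_spec μ hbspec S
    have hR0 : 0 ≤ G.betaP μ R S := (hRpol S).1
    have hcard0 : ((R.E \ P.E).filter
        fun e => e ∈ G.crossEdges S Sᶜ ∧ b e ∉ S).card = 0 := by
      by_contra hne
      have : (0:ℝ) < (((R.E \ P.E).filter
          fun e => e ∈ G.crossEdges S Sᶜ ∧ b e ∉ S).card : ℝ) := by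
        exact_mod_cast Nat.pos_of_ne_zero hne
      linarith [hβR, hzero, hR0]
    have hbS : ∀ e ∈ R.E \ P.E, e ∈ G.crossEdges S Sᶜ → b e ∈ S := by
      intro e he hcr
      by_contra hb
      have : e ∈ (R.E \ P.E).filter fun e => e ∈ G.crossEdges S Sᶜ ∧ b e ∉ S :=
        Finset.mem_filter.mpr ⟨he, hcr, hb⟩
      rw [Finset.card_eq_zero] at hcard0
      exact absurd (hcard0 ▸ this) (Finset.notMem_empty e)
    have hβRS : G.betaP μ R S = 0 := by
      rw [hβR, hcard0, hzero]; norm_num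
    have hsubR : G.crossEdges S Sᶜ ⊆ R.E := by
      by_contra hc
      have := (hRpol S).2 hc
      linarith
    have hCR : C ⊆ R.E \ P.E := by
      intro e he
      exact Finset.mem_sdiff.mpr ⟨hsubR (Finset.mem_filter.mp he).1, hCnp e he⟩
    have hba : ∀ e ∈ C, b e = a e := by
      intro e he
      have hbeS : b e ∈ S := hbS e (hCR he) (Finset.mem_filter.mp he).1
      rcases hbspec.2.1 e with hbe | hbe
      · have hsS : G.s e ∈ S := hbe ▸ hbeS
        rw [hbe, ha_def]; simp [hsS]
      · have htS : G.t e ∈ S := hbe ▸ hbeS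
        rcases hCcross e he with ⟨_, h2⟩ | ⟨h1, _⟩
        · exact absurd htS h2
        · rw [hbe, ha_def]; simp [h1]
    refine ⟨b, ?_, hbspec.2.1, fun v => ?_⟩
    · show P₁.E ⊆ R.E
      rw [hP₁_def]
      exact Finset.union_subset hbspec.1 fun e he => (Finset.mem_sdiff.mp (hCR he)).1
    · have hRE : R.E \ P₁.E = (R.E \ P.E) \ C := by
        ext e
        simp only [hP₁_def, Finset.mem_sdiff, Finset.mem_union]
        tauto
      have hsplit : ((R.E \ P.E).filter fun e => b e = v).card
          = (((R.E \ P.E) \ C).filter fun e => b e = v).card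
            + ((C.filter fun e => b e = v)).card := by
        conv_lhs => rw [← Finset.sdiff_union_of_subset hCR]
        rw [Finset.filter_union,
          Finset.card_union_of_disjoint (Finset.disjoint_filter_filter Finset.sdiff_disjoint)]
      have hfc : (C.filter fun e => b e = v) = (C.filter fun e => a e = v) :=
        Finset.filter_congr fun e he => by rw [hba e he]
      have hDv := hbspec.2.2 v
      show P.D v + ((C.filter fun e => a e = v).card : ℤ)
        = R.D v - ((R.E \ P₁.E).filter fun e => b e = v).card
      rw [hRE, hDv, hsplit, hfc]
      push_cast
      ring

lemma exists_min_polystable (μ : G.V → ℝ) :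
    ∀ (n : ℕ) (P : PseudoDiv G), (Finset.univ \ P.E).card ≤ n → G.Semistable μ P →
      ∃ Q, G.Polystable μ Q ∧ G.Spec Q P ∧
        ∀ R, G.Polystable μ R → G.Spec R P → G.Spec R Q := by
  intro n
  induction n with
  | zero =>
    intro P hcard hss
    by_cases hpol : G.Polystable μ P
    · exact ⟨P, hpol, spec_refl P, fun R _ hRP => hRP⟩
    · obtain ⟨P₁, _, _, hlt, _⟩ := polystable_step μ hss hpol
      omega
  | succ n ih =>
    intro P hcard hss
    by_cases hpol : G.Polystable μ P
    · exact ⟨P, hpol, spec_refl P, fun R _ hRP => hRP⟩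
    · obtain ⟨P₁, hss₁, hspec₁, hlt, hmin₁⟩ := polystable_step μ hss hpol
      obtain ⟨Q, hQpol, hQspec, hQmin⟩ := ih P₁ (by omega) hss₁
      exact ⟨Q, hQpol, spec_trans hQspec hspec₁, fun R hRpol hRP =>
        hQmin R hRpol (hmin₁ R hRpol hRP)⟩

end Multigraph
/-- every `μ`-semistable pseudo-divisor `(𝓔,D)` admits a unique minimal
`μ`-polystable pseudo-divisor `(𝓔',D')` specializing to it: `(𝓔',D') ≥ (𝓔,D)` and any
`μ`-polystable pseudo-divisor specializing to `(𝓔,D)` also specializes to `(𝓔',D')`. -/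
theorem exists_unique_minimal_polystable (G : Multigraph) (d : ℤ)
    (μ : G.V → ℝ) (hμ : ∑ v, μ v = (d : ℝ))
    (P : PseudoDiv G) (hP : G.Semistable μ P) :
    ∃! Q : PseudoDiv G, G.Polystable μ Q ∧ G.Spec Q P ∧
      ∀ R : PseudoDiv G, G.Polystable μ R → G.Spec R P → G.Spec R Q := by
  obtain ⟨Q, hQpol, hQspec, hQmin⟩ :=
    Multigraph.exists_min_polystable (G := G) μ _ P le_rfl hP
  refine ⟨Q, ⟨hQpol, hQspec, hQmin⟩, ?_⟩
  rintro Q' ⟨hpol', hspec', hmin'⟩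
  exact Multigraph.spec_antisymm (hQmin Q' hpol' hspec') (hmin' Q hQpol hQspec)
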